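/- The absolute value of the determinant of the non-incidence matrix B between lines and hyperplanes of F^n equals q^{((n-2)N + n)/2}, where N = (q^n-1)/(q-1). -/

import Mathlib

open Finset Matrix

set_option linter.unusedSectionVars false
set_option maxHeartbeats 1000000

section Aux

variable {F : Type*} [Field F] [Fintype F] [DecidableEq F] {n N q : ℕ}

/-- the dot-product functional -/
noncomputable def dotL (w : Fin n → F) : (Fin n → F) →ₗ[F] F where
  toFun x := ∑ k, w k * x k
  map_add' x y := by simp [mul_add, Finset.sum_add_distrib]
  map_smul' c x := by simp [Finset.mul_sum]; congr 1; ext k; ring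

lemma dotL_single (w : Fin n → F) (k : Fin n) : dotL w (Pi.single k 1) = w k := by
  simp [dotL, Pi.single_apply, mul_ite, Finset.sum_ite_eq']

lemma dotL_ne_zero {w : Fin n → F} (hw : w ≠ 0) : dotL w ≠ 0 := by
  intro h
  apply hw
  ext k
  have := dotL_single w k
  rw [h] at this
  simpa using this.symm

lemma finrank_ker_dotL {w : Fin n → F} (hw : w ≠ 0) :
    Module.finrank F (LinearMap.ker (dotL w)) = n - 1 := by
  have hrange : Module.finrank F (LinearMap.range (dotL w)) = 1 := by
    refine le_antisymm ?_ ?_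
    · have := Submodule.finrank_le (LinearMap.range (dotL w))
      simpa using this
    · rw [Nat.one_le_iff_ne_zero]
      intro h0
      rw [Submodule.finrank_eq_zero] at h0
      exact dotL_ne_zero hw (LinearMap.range_eq_bot.mp h0)
  have := LinearMap.finrank_range_add_finrank_ker (dotL w)
  rw [hrange] at this
  have hn : Module.finrank F (Fin n → F) = n := by simp
  omega

lemma exists_smul_of_ker_le {f g : (Fin n → F) →ₗ[F] F} (hf : f ≠ 0)
    (h : LinearMap.ker f ≤ LinearMap.ker g) : ∃ c : F, ∀ x, g x = c * f x := by
  have : ∃ x, f x ≠ 0 := by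
    by_contra hc
    push_neg at hc
    exact hf (LinearMap.ext fun y => by simpa using hc y)
  obtain ⟨x, hx⟩ := this
  refine ⟨g x / f x, fun y => ?_⟩
  have hker : f (y - (f y / f x) • x) = 0 := by
    simp
    field_simp
    simp
  have hg : g (y - (f y / f x) • x) = 0 := h hker
  simp at hg
  field_simp at hg ⊢
  linear_combination hg

lemma smul_of_ker_le_ker {w1 w2 : Fin n → F} (h1 : w1 ≠ 0)
    (h : LinearMap.ker (dotL w1) ≤ LinearMap.ker (dotL w2)) : ∃ c : F, w2 = c • w1 := by
  obtain ⟨c, hc⟩ := exists_smul_of_ker_le (dotL_ne_zero h1) h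
  refine ⟨c, ?_⟩
  ext k
  have := hc (Pi.single k 1)
  rw [dotL_single, dotL_single] at this
  simpa using this

lemma finrank_inf_ker (hn : 2 ≤ n) {w1 w2 : Fin n → F} (h1 : w1 ≠ 0) (h2 : w2 ≠ 0)
    (hind : ∀ c : F, w1 ≠ c • w2) :
    Module.finrank F (LinearMap.ker (dotL w1) ⊓ LinearMap.ker (dotL w2) : Submodule F (Fin n → F))
      = n - 2 := by
  set s := LinearMap.ker (dotL w1)
  set t := LinearMap.ker (dotL w2)
  have hs : Module.finrank F s = n - 1 := finrank_ker_dotL h1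
  have ht : Module.finrank F t = n - 1 := finrank_ker_dotL h2
  have hV : Module.finrank F (Fin n → F) = n := by simp
  have hsup : s ⊔ t = ⊤ := by
    by_contra hne
    have hlt := Submodule.finrank_lt (K := F) (V := Fin n → F) hne
    have hle : Module.finrank F (s ⊔ t : Submodule F (Fin n → F)) ≤ Module.finrank F s := by omega
    have heq : s = s ⊔ t := Submodule.eq_of_le_of_finrank_le le_sup_left hle
    have hts : t ≤ s := by rw [heq]; exact le_sup_right
    obtain ⟨c, hc⟩ := smul_of_ker_le_ker h2 hts
    exact hind c hc
  have := Submodule.finrank_sup_add_finrank_inf_eq s t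
  rw [hsup] at this
  rw [finrank_top, hV] at this
  omega

lemma natcard_submodule (p : Submodule F (Fin n → F)) :
    Nat.card p = (Fintype.card F) ^ (Module.finrank F p) := by
  have : Fintype p := Fintype.ofFinite p
  rw [Nat.card_eq_fintype_card]
  exact Module.card_eq_pow_finrank

lemma card_filter_dot_eq_zero (hF : Fintype.card F = q) {w : Fin n → F} (hw : w ≠ 0) :
    (univ.filter fun x : Fin n → F => ∑ k, w k * x k = 0).card = q ^ (n - 1) := by
  rw [← Fintype.card_subtype]
  have e : {x : Fin n → F // ∑ k, w k * x k = 0} ≃ LinearMap.ker (dotL w) :=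
    Equiv.subtypeEquivRight (fun x => by simp [dotL, LinearMap.mem_ker])
  rw [← Nat.card_eq_fintype_card, Nat.card_congr e, natcard_submodule, hF, finrank_ker_dotL hw]

lemma card_filter_dot2_eq_zero (hF : Fintype.card F = q) (hn : 2 ≤ n)
    {w1 w2 : Fin n → F} (h1 : w1 ≠ 0) (h2 : w2 ≠ 0) (hind : ∀ c : F, w1 ≠ c • w2) :
    (univ.filter fun x : Fin n → F => (∑ k, w1 k * x k = 0) ∧ (∑ k, w2 k * x k = 0)).card
      = q ^ (n - 2) := by
  rw [← Fintype.card_subtype]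
  have e : {x : Fin n → F // (∑ k, w1 k * x k = 0) ∧ (∑ k, w2 k * x k = 0)} ≃
      (LinearMap.ker (dotL w1) ⊓ LinearMap.ker (dotL w2) : Submodule F (Fin n → F)) :=
    Equiv.subtypeEquivRight (fun x => by simp [dotL, LinearMap.mem_ker, Submodule.mem_inf])
  rw [← Nat.card_eq_fintype_card, Nat.card_congr e, natcard_submodule, hF,
    finrank_inf_ker hn h1 h2 hind]

lemma span_eq_span_of_mem {x a b : Fin n → F} (hx : x ≠ 0) (ha : a ≠ 0)
    (hma : x ∈ Submodule.span F {a}) (hmb : x ∈ Submodule.span F {b}) :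
    Submodule.span F ({a} : Set (Fin n → F)) = Submodule.span F {b} := by
  rw [Submodule.mem_span_singleton] at hma hmb
  obtain ⟨c, hc⟩ := hma
  obtain ⟨d, hd⟩ := hmb
  have hc0 : c ≠ 0 := by rintro rfl; simp at hc; exact hx hc.symm
  apply le_antisymm <;> rw [Submodule.span_singleton_le_iff_mem, Submodule.mem_span_singleton]
  · exact ⟨c⁻¹ * d, by rw [← smul_smul, hd, ← hc, inv_smul_smul₀ hc0]⟩
  · have hd0 : d ≠ 0 := by rintro rfl; simp at hd; exact hx hd.symm
    exact ⟨d⁻¹ * c, by rw [← smul_smul, hc, ← hd, inv_smul_smul₀ hd0]⟩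

lemma proj_count (hF : Fintype.card F = q)
    (v : Fin N → (Fin n → F)) (hv0 : ∀ i, v i ≠ 0)
    (hvinj : ∀ i j, Submodule.span F {v i} = Submodule.span F {v j} → i = j)
    (hvcov : ∀ w : Fin n → F, w ≠ 0 → ∃ i, w ∈ Submodule.span F {v i})
    (hNpos : 0 < N)
    (P : (Fin n → F) → Prop) [DecidablePred P] (hP0 : ¬ P 0)
    (hPs : ∀ (c : F), c ≠ 0 → ∀ x, (P (c • x) ↔ P x)) :
    (univ.filter P).card = (q - 1) * (univ.filter fun k => P (v k)).card := by
  classical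
  have : Nonempty (Fin N) := ⟨⟨0, hNpos⟩⟩
  set f : (Fin n → F) → Fin N :=
    fun x => if h : x ≠ 0 then (hvcov x h).choose else Classical.arbitrary _ with hf
  have hfspec : ∀ x (h : x ≠ 0), x ∈ Submodule.span F {v (f x)} := by
    intro x h
    simp only [hf, dif_pos h]
    exact (hvcov x h).choose_spec
  have hfeq : ∀ x (h : x ≠ 0) (i : Fin N), x ∈ Submodule.span F {v i} → f x = i := by
    intro x h i hm
    exact (hvinj _ _ (span_eq_span_of_mem h (hv0 _) (hfspec x h) hm)).symm ▸ rfl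
  rw [Finset.card_eq_sum_card_fiberwise (f := f) (t := univ) (fun x _ => mem_univ _)]
  have hfib : ∀ i : Fin N, ((univ.filter P).filter fun x => f x = i).card
      = if P (v i) then q - 1 else 0 := by
    intro i
    by_cases hPi : P (v i)
    · rw [if_pos hPi]
      rw [← hF]
      have hcF : (univ.filter fun c : F => c ≠ 0).card = Fintype.card F - 1 := by
        rw [Finset.filter_ne', Finset.card_erase_of_mem (mem_univ _), Finset.card_univ]
      rw [← hcF]
      symm
      apply Finset.card_bij (fun c _ => c • v i)
      · intro c hc
        simp only [mem_filter, mem_univ, true_and] at hc ⊢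
        have hne : c • v i ≠ 0 := smul_ne_zero hc (hv0 i)
        refine ⟨(hPs c hc (v i)).mpr hPi, ?_⟩
        exact hfeq _ hne i (Submodule.mem_span_singleton.mpr ⟨c, rfl⟩)
      · intro c hc d hd hcd
        have : (c - d) • v i = 0 := by rw [sub_smul, hcd, sub_self]
        rcases smul_eq_zero.mp this with h | h
        · exact sub_eq_zero.mp h
        · exact absurd h (hv0 i)
      · intro x hx
        simp only [mem_filter, mem_univ, true_and] at hx
        obtain ⟨hPx, hfx⟩ := hx
        have hx0 : x ≠ 0 := fun h => hP0 (h ▸ hPx)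
        have := hfspec x hx0
        rw [hfx] at this
        obtain ⟨c, hc⟩ := Submodule.mem_span_singleton.mp this
        have hc0 : c ≠ 0 := by rintro rfl; simp at hc; exact hx0 hc.symm
        exact ⟨c, by simp [hc0], hc⟩
    · rw [if_neg hPi]
      rw [Finset.card_eq_zero, Finset.eq_empty_iff_forall_notMem]
      intro x hx
      simp only [mem_filter, mem_univ, true_and] at hx
      obtain ⟨hPx, hfx⟩ := hx
      have hx0 : x ≠ 0 := fun h => hP0 (h ▸ hPx)
      have := hfspec x hx0
      rw [hfx] at this
      obtain ⟨c, hc⟩ := Submodule.mem_span_singleton.mp this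
      have hc0 : c ≠ 0 := by rintro rfl; simp at hc; exact hx0 hc.symm
      exact hPi ((hPs c hc0 (v i)).mp (hc ▸ hPx))
  calc ∑ i : Fin N, ((univ.filter P).filter fun x => f x = i).card
      = ∑ i : Fin N, if P (v i) then q - 1 else 0 :=
        Finset.sum_congr rfl fun i _ => hfib i
    _ = (q - 1) * (univ.filter fun k => P (v k)).card := by
        rw [← Finset.sum_filter, Finset.sum_const, smul_eq_mul, mul_comm]

end Aux

theorem det_B_abs (q n N : ℕ) (hq : 2 ≤ q) (hn : 2 ≤ n)
    (F : Type*) [Field F] [Fintype F] [DecidableEq F] (hF : Fintype.card F = q)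
    (hN : N = (q ^ n - 1) / (q - 1))
    (v : Fin N → (Fin n → F))
    (hv0 : ∀ i, v i ≠ 0)
    (hvinj : ∀ i j, Submodule.span F {v i} = Submodule.span F {v j} → i = j)
    (hvcov : ∀ w : Fin n → F, w ≠ 0 → ∃ i, w ∈ Submodule.span F {v i})
    (A : Matrix (Fin N) (Fin N) ℤ)
    (hA : ∀ i j, A i j = if ∑ k, v i k * v j k = 0 then 1 else 0)
    (B : Matrix (Fin N) (Fin N) ℤ) (hB : ∀ i j, B i j = 1 - A i j):
    B.det.natAbs = q ^ (((n - 2) * N + n) / 2) := by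
  classical
  have hq1 : 0 < q - 1 := by omega
  have hqn1 : 1 ≤ q ^ n := Nat.one_le_pow _ _ (by omega)
  have hqq : q ≤ q ^ n := Nat.le_self_pow (by omega) q
  -- geometric sum
  have hS : (∑ i ∈ Finset.range n, q ^ i) * (q - 1) = q ^ n - 1 := by
    have h := geom_sum_mul (q : ℤ) n
    have hcast : ((∑ i ∈ Finset.range n, q ^ i : ℕ) : ℤ) * ((q : ℤ) - 1)
        = ((q ^ n - 1 : ℕ) : ℤ) := by
      push_cast [hqn1]
      simpa using h
    have : ((∑ i ∈ Finset.range n, q ^ i : ℕ) * (q - 1) : ℕ) = ((q ^ n - 1 : ℕ) : ℕ) := by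
      have h2 : (((∑ i ∈ Finset.range n, q ^ i : ℕ) * (q - 1) : ℕ) : ℤ)
          = ((q ^ n - 1 : ℕ) : ℤ) := by
        push_cast [show 1 ≤ q by omega]
        simpa using hcast
      exact_mod_cast h2
    exact this
  have hNS : N = ∑ i ∈ Finset.range n, q ^ i := by
    rw [hN]
    exact Nat.div_eq_of_eq_mul_left hq1 hS.symm
  have hNq : N * (q - 1) = q ^ n - 1 := by rw [hNS]; exact hS
  have hNpos : 0 < N := by
    rcases Nat.eq_zero_or_pos N with h0 | h
    · rw [h0] at hNq; simp at hNq; omega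
    · exact h
  have hZNq : (N : ℤ) * ((q : ℤ) - 1) = (q : ℤ) ^ n - 1 := by
    have := hNq
    zify [hqn1, show 1 ≤ q by omega] at this
    exact this
  -- counting
  have hspan_ne : ∀ i j : Fin N, i ≠ j → ∀ c : F, v i ≠ c • v j := by
    intro i j hij c hc
    apply hij
    apply hvinj
    exact span_eq_span_of_mem (hv0 i) (hv0 i) (Submodule.mem_span_singleton_self _)
      (Submodule.mem_span_singleton.mpr ⟨c, hc.symm⟩)
  have hPinv : ∀ w : Fin n → F, ∀ c : F, c ≠ 0 → ∀ x : Fin n → F,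
      ((∑ t, w t * (c • x) t = 0) ↔ (∑ t, w t * x t = 0)) := by
    intro w c hc x
    have : ∑ t, w t * (c • x) t = c * ∑ t, w t * x t := by
      rw [Finset.mul_sum]
      exact Finset.sum_congr rfl fun t _ => by simp [Pi.smul_apply, smul_eq_mul]; ring
    rw [this, mul_eq_zero]
    simp [hc]
  have hpow1 : q * q ^ (n - 1) = q ^ n := by
    rw [← pow_succ']
    congr 1
    omega
  have hpow2 : q * q ^ (n - 2) = q ^ (n - 1) := by
    rw [← pow_succ']
    congr 1
    omega
  -- diagonal count
  have cnt_diag : ∀ i : Fin N,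
      (univ.filter fun k : Fin N => ¬ (∑ t, v i t * v k t = 0)).card = q ^ (n - 1) := by
    intro i
    have hc := proj_count hF v hv0 hvinj hvcov hNpos
      (fun x => ¬ (∑ t, v i t * x t = 0)) (by simp)
      (fun c hc x => not_congr (hPinv (v i) c hc x))
    have hsplit := Finset.card_filter_add_card_filter_not
      (s := (univ : Finset (Fin n → F))) (p := fun x => ∑ t, v i t * x t = 0)
    rw [card_filter_dot_eq_zero hF (hv0 i)] at hsplit
    have hcV : (univ : Finset (Fin n → F)).card = q ^ n := by
      rw [Finset.card_univ]
      simp [hF]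
    rw [hcV] at hsplit
    have hval : (univ.filter fun x : Fin n → F => ¬ (∑ t, v i t * x t = 0)).card
        = q ^ n - q ^ (n - 1) := Nat.eq_sub_of_add_eq' hsplit
    rw [hval] at hc
    have key : (q - 1) * ((univ.filter fun k : Fin N => ¬ (∑ t, v i t * v k t = 0)).card)
        = (q - 1) * q ^ (n - 1) := by
      rw [← hc, Nat.sub_mul, one_mul, hpow1]
    exact Nat.eq_of_mul_eq_mul_left hq1 key
  -- off-diagonal count
  have cnt_off : ∀ i j : Fin N, i ≠ j →
      ((univ.filter fun k : Fin N =>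
        ¬ (∑ t, v i t * v k t = 0) ∧ ¬ (∑ t, v j t * v k t = 0)).card : ℤ)
      = (q : ℤ) ^ (n - 1) - (q : ℤ) ^ (n - 2) := by
    intro i j hij
    have hc := proj_count hF v hv0 hvinj hvcov hNpos
      (fun x => ¬ (∑ t, v i t * x t = 0) ∧ ¬ (∑ t, v j t * x t = 0)) (by simp)
      (fun c hc x => and_congr (not_congr (hPinv (v i) c hc x)) (not_congr (hPinv (v j) c hc x)))
    set cnt := (univ.filter fun k : Fin N =>
      ¬ (∑ t, v i t * v k t = 0) ∧ ¬ (∑ t, v j t * v k t = 0)).card with hcnt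
    have hsplit := Finset.card_filter_add_card_filter_not
      (s := (univ : Finset (Fin n → F)))
      (p := fun x => ¬ (∑ t, v i t * x t = 0) ∧ ¬ (∑ t, v j t * x t = 0))
    have hnegcongr : (univ.filter fun x : Fin n → F =>
        ¬ (¬ (∑ t, v i t * x t = 0) ∧ ¬ (∑ t, v j t * x t = 0)))
        = univ.filter fun x : Fin n → F =>
          (∑ t, v i t * x t = 0) ∨ (∑ t, v j t * x t = 0) := by
      apply Finset.filter_congr
      intro x _
      tauto
    rw [hnegcongr] at hsplit
    have hcV : (univ : Finset (Fin n → F)).card = q ^ n := by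
      rw [Finset.card_univ]; simp [hF]
    rw [hcV] at hsplit
    have hunion := Finset.card_union_add_card_inter
      (univ.filter fun x : Fin n → F => ∑ t, v i t * x t = 0)
      (univ.filter fun x : Fin n → F => ∑ t, v j t * x t = 0)
    rw [← Finset.filter_or, ← Finset.filter_and] at hunion
    rw [card_filter_dot_eq_zero hF (hv0 i), card_filter_dot_eq_zero hF (hv0 j)] at hunion
    rw [card_filter_dot2_eq_zero hF hn (hv0 i) (hv0 j) (hspan_ne i j hij)] at hunion
    -- pass to ℤ
    rw [hc] at hsplit
    have e1 : ((q : ℤ) - 1) * (cnt : ℤ)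
        + ((univ.filter fun x : Fin n → F =>
            (∑ t, v i t * x t = 0) ∨ (∑ t, v j t * x t = 0)).card : ℤ) = (q : ℤ) ^ n := by
      have h0 := congrArg (Nat.cast : ℕ → ℤ) hsplit
      push_cast [Nat.cast_sub (le_trans one_le_two hq)] at h0
      linarith [h0]
    have e2 : ((univ.filter fun x : Fin n → F =>
            (∑ t, v i t * x t = 0) ∨ (∑ t, v j t * x t = 0)).card : ℤ)
        + (q : ℤ) ^ (n - 2) = 2 * (q : ℤ) ^ (n - 1) := by
      have h0 := congrArg (Nat.cast : ℕ → ℤ) hunion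
      push_cast at h0
      linarith [h0]
    have hz1 : (q : ℤ) * (q : ℤ) ^ (n - 1) = (q : ℤ) ^ n := by exact_mod_cast hpow1
    have hz2 : (q : ℤ) * (q : ℤ) ^ (n - 2) = (q : ℤ) ^ (n - 1) := by exact_mod_cast hpow2
    have hq0 : ((q : ℤ) - 1) ≠ 0 := by
      have h2z : (2 : ℤ) ≤ (q : ℤ) := by exact_mod_cast hq
      exact sub_ne_zero.mpr (by linarith)
    apply mul_left_cancel₀ hq0
    rw [show ((q:ℤ) - 1) * ((q:ℤ) ^ (n-1) - (q:ℤ) ^ (n-2))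
        = (q:ℤ)^n + (q:ℤ)^(n-2) - 2 * (q:ℤ)^(n-1) by
      rw [← hz1, ← hz2]; ring]
    linarith [e1, e2]
  -- matrix identity
  have hBentry : ∀ i k, B i k = if (∑ t, v i t * v k t = 0) then 0 else 1 := by
    intro i k
    rw [hB, hA]
    split_ifs <;> ring
  have hBB : ∀ i j : Fin N, (B * Bᵀ) i j
      = ((univ.filter fun k : Fin N =>
          ¬ (∑ t, v i t * v k t = 0) ∧ ¬ (∑ t, v j t * v k t = 0)).card : ℤ) := by
    intro i j
    rw [Matrix.mul_apply, ← Finset.sum_boole]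
    apply Finset.sum_congr rfl
    intro k _
    rw [Matrix.transpose_apply, hBentry, hBentry]
    split_ifs <;> simp_all
  have hMeq : B * Bᵀ = ((q : ℤ) ^ (n - 2)) •
      (1 + Matrix.replicateCol Unit (fun _ : Fin N => (q : ℤ) - 1) * Matrix.replicateRow Unit (fun _ : Fin N => (1 : ℤ))) := by
    ext i j
    rw [hBB i j]
    simp only [Matrix.smul_apply, Matrix.add_apply, Matrix.one_apply, Matrix.mul_apply,
      Matrix.replicateCol_apply, Matrix.replicateRow_apply, Finset.univ_unique, Finset.sum_singleton,
      smul_eq_mul]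
    have hz2 : (q : ℤ) * (q : ℤ) ^ (n - 2) = (q : ℤ) ^ (n - 1) := by exact_mod_cast hpow2
    by_cases hij : i = j
    · subst hij
      rw [if_pos rfl]
      have hcongr : (univ.filter fun k : Fin N =>
          ¬ (∑ t, v i t * v k t = 0) ∧ ¬ (∑ t, v i t * v k t = 0))
          = univ.filter fun k : Fin N => ¬ (∑ t, v i t * v k t = 0) := by
        apply Finset.filter_congr
        intro x _
        tauto
      rw [hcongr, cnt_diag i]
      push_cast
      rw [← hz2]
      ring
    · rw [if_neg hij, cnt_off i j hij]
      rw [← hz2]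
      ring
  -- determinant
  have hdet : B.det * B.det = (q : ℤ) ^ ((n - 2) * N + n) := by
    have hmul := Matrix.det_mul B Bᵀ
    rw [Matrix.det_transpose] at hmul
    rw [← hmul, hMeq, Matrix.det_smul, Matrix.det_one_add_replicateCol_mul_replicateRow]
    have hdot : (fun _ : Fin N => (1 : ℤ)) ⬝ᵥ (fun _ => (q : ℤ) - 1) = (N : ℤ) * ((q:ℤ) - 1) := by
      simp [dotProduct, Finset.sum_const, mul_comm]
      ring
    rw [hdot, hZNq]
    rw [Fintype.card_fin, ← pow_mul, show (1 : ℤ) + ((q:ℤ)^n - 1) = (q:ℤ)^n by ring, ← pow_add]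
  -- parity
  have hEeven : Even ((n - 2) * N + n) := by
    rcases Nat.even_or_odd n with he | ho
    · have h2 : Even (n - 2) := (Nat.even_sub hn).mpr (by simp [he])
      exact (h2.mul_right N).add he
    · have hNodd : Odd N := by
        rcases Nat.even_or_odd q with hqe | hqo
        · have hodd : Odd (q ^ n - 1) :=
            Nat.Even.sub_odd hqn1 (hqe.pow_of_ne_zero (by omega)) odd_one
          rw [← hNq] at hodd
          exact (Nat.odd_mul.mp hodd).1
        · rw [Nat.odd_iff, hNS, Finset.sum_nat_mod]
          have : ∀ i ∈ Finset.range n, q ^ i % 2 = 1 := by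
            intro i _
            exact Nat.odd_iff.mp hqo.pow
          rw [Finset.sum_congr rfl this, Finset.sum_const, smul_eq_mul, mul_one,
            Finset.card_range]
          exact Nat.odd_iff.mp ho
      have h2 : Odd (n - 2) := by
        rw [Nat.odd_iff] at ho ⊢
        omega
      exact (h2.mul hNodd).add_odd ho
  obtain ⟨m, hm⟩ := hEeven
  have hE2 : ((n - 2) * N + n) / 2 = m := by omega
  have habs : B.det.natAbs ^ 2 = q ^ ((n - 2) * N + n) := by
    have h2 : ((B.det.natAbs * B.det.natAbs : ℕ) : ℤ) = ((q ^ ((n - 2) * N + n) : ℕ) : ℤ) := by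
      push_cast [Int.natCast_natAbs]
      rw [abs_mul_abs_self]
      exact hdet
    have h3 : B.det.natAbs * B.det.natAbs = q ^ ((n - 2) * N + n) := Nat.cast_injective h2
    rw [pow_two]
    exact h3
  rw [hE2]
  have hq2 : q ^ ((n - 2) * N + n) = (q ^ m) ^ 2 := by
    rw [← pow_mul]
    congr 1
    omega
  rw [hq2] at habs
  exact Nat.pow_left_injective (by omega) habs
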